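/- arXiv:1801.07040 — 2 statements merged into one kernel-verified Lean document; each statement's English description precedes it below -/
import Mathlib

section
/- Let K ⊆ ℂ be a subfield stable under complex conjugation, let n ≥ 1, and let μ₁, …, μₙ ∈ K be such that the vectors (μ₁, …, μₙ) and (μ̄₁, …, μ̄ₙ) in ℂⁿ are linearly independent over ℂ. Let a = (a_{ij}) be an n × n matrix with integer entries and let λ, λ' ∈ ℂ satisfy Σ_j a_{ij} μ_j = λ μ_i + λ' μ̄_i for all i = 1, …, n. Then λ ∈ K and λ' ∈ K. -/
open scoped BigOperators

/-! Linear independence of `μ` and `μ̄` gives two rows `i, j` with a nonzero `2 × 2` minor. These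
two rows form a linear system for `(λ, λ')` whose coefficients `μᵢ, μ̄ᵢ, μⱼ, μ̄ⱼ` and right-hand
sides `∑ₗ aᵢₗ μₗ` lie in `K`, so Cramer's rule puts `λ` and `λ'` in `K`. -/

theorem LinearIndependent.exists_mul_sub_mul_ne_zero {F ι : Type*} [Field F] {u w : ι → F}
    (h : LinearIndependent F ![u, w]) : ∃ i j, u i * w j - u j * w i ≠ 0 := by
  by_contra! hminors
  obtain ⟨i₀, hi₀⟩ : ∃ i, u i ≠ 0 := Function.ne_iff.mp (h.ne_zero 0)
  have hcomb : w i₀ • u + (-u i₀) • w = 0 := funext fun i => by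
    simp only [Pi.add_apply, Pi.smul_apply, smul_eq_mul, Pi.zero_apply]
    linear_combination hminors i i₀
  exact hi₀ (neg_eq_zero.mp (LinearIndependent.pair_iff.mp h _ _ hcomb).2)

theorem Subfield.mem_of_mul_add_mul_mem {L : Type*} [Field L] (K : Subfield L)
    {x y a b c d : L} (ha : a ∈ K) (hb : b ∈ K) (hc : c ∈ K) (hd : d ∈ K)
    (hdet : a * d - c * b ≠ 0) (h₁ : x * a + y * b ∈ K) (h₂ : x * c + y * d ∈ K) :
    x ∈ K ∧ y ∈ K := by
  have hx : x = ((x * a + y * b) * d - (x * c + y * d) * b) / (a * d - c * b) := by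
    rw [eq_div_iff hdet]; ring
  have hy : y = ((x * c + y * d) * a - (x * a + y * b) * c) / (a * d - c * b) := by
    rw [eq_div_iff hdet]; ring
  have hdetK : a * d - c * b ∈ K := sub_mem (mul_mem ha hd) (mul_mem hc hb)
  constructor
  · rw [hx]; exact div_mem (sub_mem (mul_mem h₁ hd) (mul_mem h₂ hb)) hdetK
  · rw [hy]; exact div_mem (sub_mem (mul_mem h₂ ha) (mul_mem h₁ hc)) hdetK

theorem stmt_3_general (K : Subfield ℂ) (hconj : ∀ x ∈ K, (starRingEnd ℂ) x ∈ K)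
    (n : ℕ) (μ : Fin n → K)
    (hind : LinearIndependent ℂ
      ![(fun i => (μ i : ℂ)), (fun i => (starRingEnd ℂ) (μ i : ℂ))])
    (a : Matrix (Fin n) (Fin n) ℤ) (lam lam' : ℂ)
    (heq : ∀ i, ∑ j, (a i j : ℂ) * (μ j : ℂ) =
      lam * (μ i : ℂ) + lam' * (starRingEnd ℂ) (μ i : ℂ)) :
    lam ∈ K ∧ lam' ∈ K := by
  obtain ⟨i, j, hdet⟩ := hind.exists_mul_sub_mul_ne_zero
  have hrow : ∀ k, lam * (μ k : ℂ) + lam' * (starRingEnd ℂ) (μ k : ℂ) ∈ K := fun k =>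
    heq k ▸ sum_mem fun l _ => mul_mem (intCast_mem K (a k l)) (μ l).2
  exact K.mem_of_mul_add_mul_mem (μ i).2 (hconj _ (μ i).2) (μ j).2 (hconj _ (μ j).2) hdet
    (hrow i) (hrow j)

/-- Let `K ⊆ ℂ` be a subfield stable under complex conjugation, `n ≥ 1`, and
`μ₁, …, μₙ ∈ K` such that `(μ₁, …, μₙ)` and `(μ̄₁, …, μ̄ₙ)` are linearly independent over `ℂ`.
If an integer matrix `a` and `λ, λ' ∈ ℂ` satisfy `Σ_j a_{ij} μ_j = λ μ_i + λ' μ̄_i` for all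
`i`, then `λ ∈ K` and `λ' ∈ K`. -/
theorem stmt_3 (K : Subfield ℂ) (hconj : ∀ x ∈ K, (starRingEnd ℂ) x ∈ K)
    (n : ℕ) (hn : 1 ≤ n) (μ : Fin n → K)
    (hind : LinearIndependent ℂ
      ![(fun i => (μ i : ℂ)), (fun i => (starRingEnd ℂ) (μ i : ℂ))])
    (a : Matrix (Fin n) (Fin n) ℤ) (lam lam' : ℂ)
    (heq : ∀ i, ∑ j, (a i j : ℂ) * (μ j : ℂ) =
      lam * (μ i : ℂ) + lam' * (starRingEnd ℂ) (μ i : ℂ)) :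
    lam ∈ K ∧ lam' ∈ K :=
  stmt_3_general K hconj n μ hind a lam lam' heq
end

section
/- Let T be a finite-dimensional ℚ-vector space with a symmetric ℚ-bilinear form b, and let K be a subfield of the ℚ-algebra End_ℚ(T) (a commutative ℚ-subalgebra that is a field) such that T, viewed as a K-vector space via this action, has dim_K T = 1, and such that every α ∈ K admits an adjoint α' ∈ K with b(α(x), y) = b(x, α'(y)) for all x, y ∈ T. Let σ ∈ T ⊗_ℚ ℂ and let g : K → ℂ be a ring homomorphism such that the ℂ-linear extension of every α ∈ K satisfies α_ℂ(σ) = g(α)·σ. Assume there exists γ₁ ∈ T with b_ℂ(σ, γ₁) = 1, where b_ℂ denotes the ℂ-bilinear extension of b. Then b_ℂ(σ, γ) lies in the subfield g(K) ⊆ ℂ for every γ ∈ T; in particular, the period field ℚ({b_ℂ(σ, γ) : γ ∈ T}) is contained in g(K). -/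
open scoped TensorProduct

/-!
If `α ∈ K` sends `γ₁` to `γ` (possible since `T` is a one-dimensional `K`-vector space and
`γ₁ ≠ 0`), moving `α` across the base-changed form turns it into its adjoint `α'` acting on `σ`,
where it is the scalar `g(α')`; hence `b_ℂ(σ, γ) = g(α') · b_ℂ(σ, γ₁) = g(α')`.
-/

namespace LinearMap.BilinForm

variable {R A M : Type*} [CommSemiring R] [CommSemiring A] [Algebra R A]
  [AddCommMonoid M] [Module R M]

theorem baseChange_apply_baseChange_eq {b : LinearMap.BilinForm R M} {f f' : Module.End R M}
    (h : ∀ x y, b x (f y) = b (f' x) y) (τ υ : A ⊗[R] M) :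
    b.baseChange A τ (f.baseChange A υ) = b.baseChange A (f'.baseChange A τ) υ := by
  induction τ using TensorProduct.induction_on with
  | zero => simp
  | add τ₁ τ₂ h₁ h₂ => simp only [map_add, LinearMap.add_apply, h₁, h₂]
  | tmul a x =>
    induction υ using TensorProduct.induction_on with
    | zero => simp
    | add υ₁ υ₂ h₁ h₂ => simp only [map_add, h₁, h₂]
    | tmul a' y => simp only [LinearMap.baseChange_tmul, baseChange_tmul, h]

end LinearMap.BilinForm

theorem Subalgebra.exists_mem_apply_eq_of_isField {R M : Type*} [CommRing R] [AddCommGroup M]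
    [Module R M] {K : Subalgebra R (Module.End R M)} (hK : IsField K) {t : M}
    (ht : ∀ x : M, ∃ α ∈ K, α t = x) {x : M} (hx : x ≠ 0) (y : M) :
    ∃ α ∈ K, α x = y := by
  let := hK.toField
  obtain ⟨β, hβK, rfl⟩ := ht x
  obtain ⟨δ, hδK, rfl⟩ := ht y
  have hβ : (⟨β, hβK⟩ : K) ≠ 0 := fun h => hx <| by
    rw [show β = 0 from congrArg Subtype.val h, LinearMap.zero_apply]
  have hβinv : (((⟨β, hβK⟩ : K)⁻¹ : K) : Module.End R M) * β = 1 :=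
    congrArg Subtype.val (inv_mul_cancel₀ hβ)
  refine ⟨δ * ((⟨β, hβK⟩ : K)⁻¹ : K), K.mul_mem hδK (SetLike.coe_mem _), ?_⟩
  rw [Module.End.mul_apply, ← Module.End.mul_apply _ β, hβinv, Module.End.one_apply]

theorem stmt_7_general {T : Type*} [AddCommGroup T] [Module ℚ T]
    (b : T →ₗ[ℚ] T →ₗ[ℚ] ℚ) (hsymm : ∀ x y, b x y = b y x)
    (K : Subalgebra ℚ (Module.End ℚ T)) (hK : IsField K)
    -- `dim_K T = 1`: some nonzero `t ∈ T` is a `K`-basis of `T`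
    (hdim : ∃ t : T, t ≠ 0 ∧ ∀ x : T, ∃ α ∈ K, α t = x)
    (hadj : ∀ α ∈ K, ∃ α' ∈ K, ∀ x y : T, b (α x) y = b x (α' y))
    (σ : ℂ ⊗[ℚ] T) (g : K →+* ℂ)
    (hg : ∀ α : K, LinearMap.baseChange ℂ (α : Module.End ℚ T) σ = g α • σ)
    (hγ₁ : ∃ γ₁ : T, LinearMap.BilinForm.baseChange ℂ b σ ((1 : ℂ) ⊗ₜ[ℚ] γ₁) = 1) :
    (∀ γ : T, LinearMap.BilinForm.baseChange ℂ b σ ((1 : ℂ) ⊗ₜ[ℚ] γ) ∈ Set.range g) ∧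
      ∀ z ∈ Subfield.closure
        (Set.range fun γ : T => LinearMap.BilinForm.baseChange ℂ b σ ((1 : ℂ) ⊗ₜ[ℚ] γ)),
        z ∈ Set.range g := by
  obtain ⟨γ₁, hσγ₁⟩ := hγ₁
  obtain ⟨t, -, ht⟩ := hdim
  have hγ₁0 : γ₁ ≠ 0 := by
    rintro rfl
    simp at hσγ₁
  have periods_mem : ∀ γ : T,
      LinearMap.BilinForm.baseChange ℂ b σ ((1 : ℂ) ⊗ₜ[ℚ] γ) ∈ Set.range g := by
    intro γ
    obtain ⟨α, hαK, rfl⟩ := K.exists_mem_apply_eq_of_isField hK ht hγ₁0 γ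
    obtain ⟨α', hα'K, hα'⟩ := hadj α hαK
    have hα'_symm : ∀ x y, b x (α y) = b (α' x) y := fun x y => by
      rw [hsymm, hα', hsymm]
    refine ⟨⟨α', hα'K⟩, ?_⟩
    rw [← LinearMap.baseChange_tmul,
      LinearMap.BilinForm.baseChange_apply_baseChange_eq hα'_symm, hg ⟨α', hα'K⟩,
      LinearMap.map_smul₂, hσγ₁, smul_eq_mul, mul_one]
  let := hK.toField
  exact ⟨periods_mem, fun z hz =>
    (Subfield.closure_le (t := g.fieldRange)).mpr (Set.range_subset_iff.mpr periods_mem) hz⟩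

/-- Let `T` be a finite-dimensional `ℚ`-vector space with a symmetric bilinear form `b` and
`K ⊆ End_ℚ(T)` a commutative `ℚ`-subalgebra which is a field, with `dim_K T = 1` and such
that every `α ∈ K` admits an adjoint `α' ∈ K`.  Let `σ ∈ T ⊗_ℚ ℂ` and `g : K → ℂ` a ring
homomorphism with `α_ℂ(σ) = g(α)·σ` for all `α ∈ K`, and suppose `b_ℂ(σ, γ₁) = 1` for some
`γ₁ ∈ T`.  Then `b_ℂ(σ, γ) ∈ g(K)` for all `γ ∈ T`; in particular the period field
`ℚ({b_ℂ(σ, γ)})` is contained in `g(K)`. -/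
theorem stmt_7 {T : Type*} [AddCommGroup T] [Module ℚ T] [FiniteDimensional ℚ T]
    (b : T →ₗ[ℚ] T →ₗ[ℚ] ℚ) (hsymm : ∀ x y, b x y = b y x)
    (K : Subalgebra ℚ (Module.End ℚ T)) (hK : IsField K)
    -- `dim_K T = 1`: some nonzero `t ∈ T` is a `K`-basis of `T`
    (hdim : ∃ t : T, t ≠ 0 ∧ ∀ x : T, ∃ α ∈ K, α t = x)
    (hadj : ∀ α ∈ K, ∃ α' ∈ K, ∀ x y : T, b (α x) y = b x (α' y))
    (σ : ℂ ⊗[ℚ] T) (g : K →+* ℂ)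
    (hg : ∀ α : K, LinearMap.baseChange ℂ (α : Module.End ℚ T) σ = g α • σ)
    (hγ₁ : ∃ γ₁ : T, LinearMap.BilinForm.baseChange ℂ b σ ((1 : ℂ) ⊗ₜ[ℚ] γ₁) = 1) :
    (∀ γ : T, LinearMap.BilinForm.baseChange ℂ b σ ((1 : ℂ) ⊗ₜ[ℚ] γ) ∈ Set.range g) ∧
      ∀ z ∈ Subfield.closure
        (Set.range fun γ : T => LinearMap.BilinForm.baseChange ℂ b σ ((1 : ℂ) ⊗ₜ[ℚ] γ)),
        z ∈ Set.range g :=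
  stmt_7_general b hsymm K hK hdim hadj σ g hg hγ₁
end
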